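/- (Theorem 3.) For every real q with 0 < q < 1, integers α ≥ 1 and n ≥ 0, every real x ≥ 0, every odd positive integer d and Dirichlet character χ modulo d, Ẽ^χ_{n,q}(x|α) = Σ_{k=0}^{n} C(n,k) q^{α k x} Ẽ^χ_{k,q}(α) [x:q^α]^{n−k}. -/

import Mathlib

open scoped BigOperators

/-- `[x:q] = (q^x - 1)/(q - 1)` with real exponentiation. -/
noncomputable def qNum (q x : ℝ) : ℝ := (q ^ x - 1) / (q - 1)

/-- Dirichlet-type weighted `q`-Euler polynomial
`Ẽ^χ_{n,q}(x|α) = [2:q] ∑_{m≥0} q^m χ(m) (-1)^m [x+m:q^α]^n`. -/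
noncomputable def qEulerChi (q : ℝ) (d : ℕ) (χ : DirichletCharacter ℂ d) (α n : ℕ)
    (x : ℝ) : ℂ :=
  (qNum q 2 : ℂ) *
    ∑' m : ℕ, (q : ℂ) ^ m * χ (m : ZMod d) * (-1 : ℂ) ^ m *
      ((qNum (q ^ α) (x + (m : ℝ)) : ℝ) : ℂ) ^ n

/-!
Since `[x + y : Q] = Q^x [y : Q] + [x : Q]`, the binomial theorem expands each term of the
series defining `Ẽ^χ_{n,q}(x|α)` into a finite combination of the terms of the series for
`Ẽ^χ_{k,q}(α)`, `k ≤ n`. These series converge absolutely because `|[m : Q]| ≤ m` for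
`0 ≤ Q ≤ 1` and the weights decay like `q^m`, so the finite sum can be pulled out of the
infinite one.
-/

open Finset

lemma qNum_add {Q : ℝ} (hQ : 0 < Q) (x y : ℝ) :
    qNum Q (x + y) = Q ^ x * qNum Q y + qNum Q x := by
  simp only [qNum, Real.rpow_add hQ]
  ring

lemma qNum_natCast {Q : ℝ} (hQ : Q ≠ 1) (m : ℕ) : qNum Q m = ∑ i ∈ range m, Q ^ i := by
  rw [qNum, Real.rpow_natCast, geom_sum_eq hQ]

lemma abs_qNum_natCast_le {Q : ℝ} (hQ0 : 0 ≤ Q) (hQ1 : Q ≤ 1) (m : ℕ) : |qNum Q m| ≤ m := by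
  rcases eq_or_ne Q 1 with rfl | hQ
  · simp [qNum]
  rw [qNum_natCast hQ, abs_of_nonneg (by positivity)]
  calc ∑ i ∈ range m, Q ^ i ≤ ∑ _i ∈ range m, (1 : ℝ) :=
        sum_le_sum fun i _ => pow_le_one₀ hQ0 hQ1
    _ = m := by simp

lemma summable_mul_qNum_pow {c : ℕ → ℂ} {r Q : ℝ} (hr0 : 0 ≤ r) (hr1 : r < 1)
    (hc : ∀ m, ‖c m‖ ≤ r ^ m) (hQ0 : 0 ≤ Q) (hQ1 : Q ≤ 1) (k : ℕ) :
    Summable fun m : ℕ => c m * ((qNum Q m : ℝ) : ℂ) ^ k := by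
  have hr : ‖r‖ < 1 := by rwa [Real.norm_eq_abs, abs_of_nonneg hr0]
  refine Summable.of_norm_bounded (summable_pow_mul_geometric_of_norm_lt_one k hr) fun m => ?_
  rw [norm_mul, norm_pow, Complex.norm_real, Real.norm_eq_abs, mul_comm]
  gcongr
  exacts [abs_qNum_natCast_le hQ0 hQ1 m, hc m]

theorem tsum_mul_qNum_add_pow {c : ℕ → ℂ} {Q : ℝ} (hQ : 0 < Q) (x : ℝ) (n : ℕ)
    (hc : ∀ k, Summable fun m : ℕ => c m * ((qNum Q m : ℝ) : ℂ) ^ k) :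
    ∑' m : ℕ, c m * ((qNum Q (x + m) : ℝ) : ℂ) ^ n =
      ∑ k ∈ range (n + 1), (n.choose k : ℂ) * ((Q ^ x : ℝ) : ℂ) ^ k *
        (∑' m : ℕ, c m * ((qNum Q m : ℝ) : ℂ) ^ k) * ((qNum Q x : ℝ) : ℂ) ^ (n - k) := by
  have hexpand : ∀ m : ℕ, c m * ((qNum Q (x + m) : ℝ) : ℂ) ^ n =
      ∑ k ∈ range (n + 1), (n.choose k : ℂ) * ((Q ^ x : ℝ) : ℂ) ^ k *
        (c m * ((qNum Q m : ℝ) : ℂ) ^ k) * ((qNum Q x : ℝ) : ℂ) ^ (n - k) := by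
    intro m
    rw [qNum_add hQ, Complex.ofReal_add, Complex.ofReal_mul, add_pow, mul_sum]
    refine sum_congr rfl fun k _ => ?_
    ring
  rw [tsum_congr hexpand, Summable.tsum_finsetSum fun k _ => ((hc k).mul_left _).mul_right _]
  refine sum_congr rfl fun k _ => ?_
  rw [tsum_mul_right, tsum_mul_left]

lemma rpow_pow_eq_rpow_natCast_mul {q : ℝ} (hq : 0 ≤ q) (α k : ℕ) (x : ℝ) :
    ((q ^ α) ^ x) ^ k = q ^ ((↑(α * k) : ℝ) * x) := by
  rw [← Real.rpow_natCast q α, ← Real.rpow_mul hq, ← Real.rpow_natCast _ k,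
    ← Real.rpow_mul hq]
  push_cast
  ring_nf

lemma norm_dirichlet_weight_le {q : ℝ} (hq : 0 ≤ q) {d : ℕ} (χ : DirichletCharacter ℂ d)
    (m : ℕ) : ‖(q : ℂ) ^ m * χ (m : ZMod d) * (-1 : ℂ) ^ m‖ ≤ q ^ m := by
  rw [norm_mul, norm_mul, norm_pow, norm_pow, Complex.norm_real, Real.norm_eq_abs,
    abs_of_nonneg hq, norm_neg, norm_one, one_pow, mul_one]
  exact mul_le_of_le_one_right (pow_nonneg hq m) (χ.norm_le_one _)

theorem statement8_general (q : ℝ) (hq0 : 0 < q) (hq1 : q < 1)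
    (α : ℕ) (n : ℕ) (x : ℝ)
    (d : ℕ) (χ : DirichletCharacter ℂ d) :
    qEulerChi q d χ α n x =
      ∑ k ∈ Finset.range (n + 1),
        (n.choose k : ℂ) * ((q ^ ((↑(α * k) : ℝ) * x) : ℝ) : ℂ) * qEulerChi q d χ α k 0 *
          ((qNum (q ^ α) x : ℝ) : ℂ) ^ (n - k) := by
  have hsummable := summable_mul_qNum_pow hq0.le hq1 (norm_dirichlet_weight_le hq0.le χ)
    (pow_nonneg hq0.le α) (pow_le_one₀ hq0.le hq1.le)
  simp only [qEulerChi, zero_add]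
  rw [tsum_mul_qNum_add_pow (pow_pos hq0 α) x n hsummable, mul_sum]
  refine sum_congr rfl fun k _ => ?_
  rw [← rpow_pow_eq_rpow_natCast_mul hq0.le, Complex.ofReal_pow]
  ring

theorem statement8 (q : ℝ) (hq0 : 0 < q) (hq1 : q < 1)
    (α : ℕ) (hα : 1 ≤ α) (n : ℕ) (x : ℝ) (hx : 0 ≤ x)
    (d : ℕ) (hd0 : 0 < d) (hdo : Odd d) (χ : DirichletCharacter ℂ d) :
    qEulerChi q d χ α n x =
      ∑ k ∈ Finset.range (n + 1),
        (n.choose k : ℂ) * ((q ^ ((↑(α * k) : ℝ) * x) : ℝ) : ℂ) * qEulerChi q d χ α k 0 *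
          ((qNum (q ^ α) x : ℝ) : ℂ) ^ (n - k) :=
  statement8_general q hq0 hq1 α n x d χ
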